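/- (Kohler–Chandrasekaran; crossout is a subgame perfect equilibrium) Define the crossout strategy c by c(D) = m_n, the last morsel of the crossout sequence of D. Then for every finite dinner D with totally ordered preferences, every strategy s satisfies v_A^D(s,c) ≤ v_A^D(c,c) and v_B^D(s,c) ≤ v_B^D(c,c). -/

import Mathlib

open Finset

/-- One step of the crossout process: at Alice's steps remove the remaining morsel of
minimal first coordinate, at Bob's steps the one of minimal second coordinate. -/
noncomputable def coAux (turnA : Bool) (D : Finset (ℝ × ℝ)) : List (ℝ × ℝ) :=
  if h : D.Nonempty then
    (if turnA then (Finset.exists_min_image D Prod.fst h).choose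
      else (Finset.exists_min_image D Prod.snd h).choose) ::
      coAux (!turnA)
        (D.erase (if turnA then (Finset.exists_min_image D Prod.fst h).choose
          else (Finset.exists_min_image D Prod.snd h).choose))
  else []
termination_by D.card
decreasing_by
  apply Finset.card_erase_lt_of_mem
  split
  · exact (Finset.exists_min_image D Prod.fst h).choose_spec.1
  · exact (Finset.exists_min_image D Prod.snd h).choose_spec.1

/-- The crossout sequence of a dinner, as a list `[m₁, m₂, …, mₙ]`. -/
noncomputable def crossoutList (D : Finset (ℝ × ℝ)) : List (ℝ × ℝ) := coAux true D

/-- `crossout D i` is the `i`-th morsel `mᵢ` (1-indexed) of the crossout sequence of `D`. -/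
noncomputable def crossout (D : Finset (ℝ × ℝ)) (i : ℕ) : ℝ × ℝ :=
  (crossoutList D).getD (i - 1) (0, 0)

/-- Totally ordered preferences: distinct morsels have distinct first coordinates and
distinct second coordinates. -/
def TotallyOrderedPrefs (D : Finset (ℝ × ℝ)) : Prop :=
  (∀ p ∈ D, ∀ q ∈ D, p.1 = q.1 → p = q) ∧ (∀ p ∈ D, ∀ q ∈ D, p.2 = q.2 → p = q)

/-- Alice's crossout score: sum of first coordinates of the even-indexed crossout morsels. -/
noncomputable def chiA (D : Finset (ℝ × ℝ)) : ℝ :=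
  ∑ i ∈ Finset.Icc 1 D.card, if Even i then (crossout D i).1 else 0

/-- Bob's crossout score: sum of second coordinates of the odd-indexed crossout morsels. -/
noncomputable def chiB (D : Finset (ℝ × ℝ)) : ℝ :=
  ∑ i ∈ Finset.Icc 1 D.card, if Odd i then (crossout D i).2 else 0
/-- The crossout strategy: eat the last morsel of the crossout sequence. -/
noncomputable def crossoutStrategy (D : Finset (ℝ × ℝ)) : ℝ × ℝ := crossout D D.card

/-- Alice's score when she plays s and Bob plays t (Alice moves first iff |D| is even),
computed with fuel. -/
noncomputable def scoreA (s t : Finset (ℝ × ℝ) → ℝ × ℝ) : ℕ → Finset (ℝ × ℝ) → ℝ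
  | 0, _ => 0
  | fuel + 1, D =>
    if D.Nonempty then
      if Even D.card then (s D).1 + scoreA s t fuel (D.erase (s D))
      else scoreA s t fuel (D.erase (t D))
    else 0

/-- Bob's score when he plays s and Alice plays t (Bob moves first iff |D| is odd). -/
noncomputable def scoreB (s t : Finset (ℝ × ℝ) → ℝ × ℝ) : ℕ → Finset (ℝ × ℝ) → ℝ
  | 0, _ => 0
  | fuel + 1, D =>
    if D.Nonempty then
      if Odd D.card then (s D).2 + scoreB s t fuel (D.erase (s D))
      else scoreB s t fuel (D.erase (t D))
    else 0

/-- v_A^D(s,t): Alice plays s, Bob plays t. -/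
noncomputable def vA (s t : Finset (ℝ × ℝ) → ℝ × ℝ) (D : Finset (ℝ × ℝ)) : ℝ :=
  scoreA s t D.card D

/-- v_B^D(s,t): Bob plays s, Alice plays t. -/
noncomputable def vB (s t : Finset (ℝ × ℝ) → ℝ × ℝ) (D : Finset (ℝ × ℝ)) : ℝ :=
  scoreB s t D.card D

/-!
Under (crossout, crossout) the player to move eats the last morsel `L` of the crossout sequence
of `D`, and the crossout sequence of `D - L` is that of `D` with `L` dropped. Hence each player's
score is `χ(D)`, the total utility of the morsels crossed out at the other player's steps, and by
induction on `|D|` optimality reduces to the one-step inequality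
`χ(D - q) + u(q) ≤ χ(D - L) + u(L)` for `q ∈ D`. This is proved along the crossout sequence: if
`q` is not the first crossed-out morsel `m`, the first step is unchanged and induction applies; if
`q = m`, removing `q` replaces `m` by the next crossed-out morsel `m'`, and when `m` was crossed
out at the scored player's own step, `u(m) ≤ u(m')` by minimality of `m`.
-/

/-- Players are encoded by `Bool`: `true` is Alice, whose utility is the first coordinate, and
`false` is Bob. A crossout step with flag `b` removes the morsel player `b` likes least. -/
def utility : Bool → ℝ × ℝ → ℝ
  | true => Prod.fst
  | false => Prod.snd

noncomputable def leastMorsel (b : Bool) (D : Finset (ℝ × ℝ)) (h : D.Nonempty) : ℝ × ℝ :=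
  (D.exists_min_image (utility b) h).choose

lemma leastMorsel_mem (b : Bool) {D : Finset (ℝ × ℝ)} (h : D.Nonempty) :
    leastMorsel b D h ∈ D :=
  (D.exists_min_image (utility b) h).choose_spec.1

lemma utility_leastMorsel_le (b : Bool) {D : Finset (ℝ × ℝ)} (h : D.Nonempty) {x : ℝ × ℝ}
    (hx : x ∈ D) : utility b (leastMorsel b D h) ≤ utility b x :=
  (D.exists_min_image (utility b) h).choose_spec.2 x hx

lemma TotallyOrderedPrefs.injOn {D : Finset (ℝ × ℝ)} (hD : TotallyOrderedPrefs D) (b : Bool) :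
    Set.InjOn (utility b) D := by
  cases b
  exacts [fun p hp q hq => hD.2 p hp q hq, fun p hp q hq => hD.1 p hp q hq]

lemma TotallyOrderedPrefs.mono {D E : Finset (ℝ × ℝ)} (hD : TotallyOrderedPrefs D)
    (hE : E ⊆ D) : TotallyOrderedPrefs E :=
  ⟨fun p hp q hq => hD.1 p (hE hp) q (hE hq), fun p hp q hq => hD.2 p (hE hp) q (hE hq)⟩

lemma leastMorsel_erase {D : Finset (ℝ × ℝ)} (hD : TotallyOrderedPrefs D) (b : Bool)
    (h : D.Nonempty) {x : ℝ × ℝ} (hx : x ≠ leastMorsel b D h) (h' : (D.erase x).Nonempty) :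
    leastMorsel b (D.erase x) h' = leastMorsel b D h := by
  have hm : leastMorsel b D h ∈ D.erase x := mem_erase.2 ⟨hx.symm, leastMorsel_mem b h⟩
  have hm' := leastMorsel_mem b h'
  exact hD.injOn b (mem_of_mem_erase hm') (leastMorsel_mem b h) <|
    (utility_leastMorsel_le b h' hm).antisymm (utility_leastMorsel_le b h (mem_of_mem_erase hm'))

lemma coAux_of_nonempty (b : Bool) {D : Finset (ℝ × ℝ)} (h : D.Nonempty) :
    coAux b D = leastMorsel b D h :: coAux (!b) (D.erase (leastMorsel b D h)) := by
  rw [coAux, dif_pos h]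
  cases b <;> rfl

lemma coAux_empty (b : Bool) : coAux b ∅ = [] := by
  rw [coAux, dif_neg Finset.not_nonempty_empty]

@[elab_as_elim]
theorem coAux_induction {motive : Bool → Finset (ℝ × ℝ) → Prop} (empty : ∀ b, motive b ∅)
    (step : ∀ b D (h : D.Nonempty), motive (!b) (D.erase (leastMorsel b D h)) → motive b D)
    (b : Bool) (D : Finset (ℝ × ℝ)) : motive b D :=
  coAux.induct motive (fun b D h ih => step b D h (by cases b <;> exact ih))
    (fun b D h => not_nonempty_iff_eq_empty.1 h ▸ empty b) b D

lemma length_coAux (b : Bool) (D : Finset (ℝ × ℝ)) : (coAux b D).length = D.card := by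
  induction b, D using coAux_induction with
  | empty b => simp [coAux_empty]
  | step b D h ih =>
    rw [coAux_of_nonempty b h, List.length_cons, ih, card_erase_add_one (leastMorsel_mem b h)]

lemma mem_of_mem_coAux {b : Bool} {D : Finset (ℝ × ℝ)} {x : ℝ × ℝ} (hx : x ∈ coAux b D) :
    x ∈ D := by
  induction b, D using coAux_induction with
  | empty b => simp [coAux_empty] at hx
  | step b D h ih =>
    rw [coAux_of_nonempty b h, List.mem_cons] at hx
    rcases hx with rfl | hx
    exacts [leastMorsel_mem b h, mem_of_mem_erase (ih hx)]

lemma coAux_erase_of_ne_leastMorsel {D : Finset (ℝ × ℝ)} (hD : TotallyOrderedPrefs D) (b : Bool)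
    (h : D.Nonempty) {x : ℝ × ℝ} (hxm : x ≠ leastMorsel b D h) :
    coAux b (D.erase x) =
      leastMorsel b D h :: coAux (!b) ((D.erase (leastMorsel b D h)).erase x) := by
  have h' : (D.erase x).Nonempty := ⟨_, mem_erase.2 ⟨hxm.symm, leastMorsel_mem b h⟩⟩
  rw [coAux_of_nonempty b h', leastMorsel_erase hD b h hxm h', erase_right_comm]

noncomputable def lastCrossout (b : Bool) (D : Finset (ℝ × ℝ)) : ℝ × ℝ :=
  (coAux b D).getD (D.card - 1) (0, 0)

lemma lastCrossout_mem (b : Bool) {D : Finset (ℝ × ℝ)} (h : D.Nonempty) :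
    lastCrossout b D ∈ D := by
  have hlt : D.card - 1 < (coAux b D).length := by
    rw [length_coAux]; exact Nat.sub_one_lt (card_pos.2 h).ne'
  rw [lastCrossout, List.getD_eq_getElem _ _ hlt]
  exact mem_of_mem_coAux (List.getElem_mem hlt)

lemma lastCrossout_of_one_lt_card (b : Bool) {D : Finset (ℝ × ℝ)} (h : D.Nonempty)
    (hcard : 1 < D.card) :
    lastCrossout b D = lastCrossout (!b) (D.erase (leastMorsel b D h)) := by
  obtain ⟨k, hk⟩ : ∃ k, D.card = k + 2 := ⟨D.card - 2, by omega⟩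
  rw [lastCrossout, lastCrossout, coAux_of_nonempty b h,
    card_erase_of_mem (leastMorsel_mem b h), hk]
  exact List.getD_cons_succ

lemma coAux_eq_append {D : Finset (ℝ × ℝ)} (hD : TotallyOrderedPrefs D) (b : Bool)
    (h : D.Nonempty) :
    coAux b D = coAux b (D.erase (lastCrossout b D)) ++ [lastCrossout b D] := by
  induction b, D using coAux_induction with
  | empty b => exact absurd h Finset.not_nonempty_empty
  | step b D hne ih =>
    set m := leastMorsel b D hne
    rcases (D.erase m).eq_empty_or_nonempty with hE | hE
    · have hL : lastCrossout b D = m := by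
        have hcard : D.card = 1 := by rw [← card_erase_add_one (leastMorsel_mem b hne), hE]; rfl
        rw [lastCrossout, coAux_of_nonempty b hne, hcard]; rfl
      rw [hL, coAux_of_nonempty b hne, hE, coAux_empty, coAux_empty]; rfl
    · have hcard : 1 < D.card := by
        rw [← card_erase_add_one (leastMorsel_mem b hne)]
        exact Nat.lt_add_of_pos_left hE.card_pos
      have hL := lastCrossout_of_one_lt_card b hne hcard
      have hLm : lastCrossout b D ≠ m := by
        rw [hL]; exact ne_of_mem_erase (lastCrossout_mem (!b) hE)
      rw [coAux_erase_of_ne_leastMorsel hD b hne hLm,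
        coAux_of_nonempty b hne, ih (hD.mono (erase_subset _ _)) hE, hL]
      rfl

/-- In a crossout sequence whose first step has flag `b`, player `c` receives the morsels
crossed out at the other player's steps. -/
noncomputable def payoff (c : Bool) : Bool → List (ℝ × ℝ) → ℝ
  | _, [] => 0
  | b, x :: l => (if b = c then 0 else utility c x) + payoff c (!b) l

def flagAt (b : Bool) (k : ℕ) : Bool := if Even k then b else !b

lemma flagAt_succ (b : Bool) (k : ℕ) : flagAt b (k + 1) = flagAt (!b) k := by
  by_cases hk : Even k <;> simp [flagAt, Nat.even_add_one, hk]

lemma payoff_append (c b : Bool) (l : List (ℝ × ℝ)) (x : ℝ × ℝ) :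
    payoff c b (l ++ [x]) = payoff c b l + if flagAt b l.length = c then 0 else utility c x := by
  induction l generalizing b with
  | nil => simp [payoff, flagAt]
  | cons y l ih =>
    rw [List.cons_append, payoff, payoff, ih, List.length_cons, flagAt_succ, add_assoc]

lemma payoff_coAux_eq_add {D : Finset (ℝ × ℝ)} (hD : TotallyOrderedPrefs D) (c : Bool)
    (h : D.Nonempty) :
    payoff c true (coAux true D) = payoff c true (coAux true (D.erase (lastCrossout true D))) +
      if (Even D.card ↔ c) then utility c (lastCrossout true D) else 0 := by
  obtain ⟨k, hk⟩ := Nat.exists_eq_add_one_of_ne_zero (card_pos.2 h).ne'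
  rw [coAux_eq_append hD true h, payoff_append, length_coAux,
    card_erase_of_mem (lastCrossout_mem true h), hk, Nat.add_sub_cancel]
  cases c <;> by_cases hk : Even k <;> simp [flagAt, Nat.even_add_one, hk]

theorem payoff_erase_add_le {D : Finset (ℝ × ℝ)} (hD : TotallyOrderedPrefs D) (c b : Bool)
    {q : ℝ × ℝ} (hq : q ∈ D) :
    payoff c b (coAux b (D.erase q)) + utility c q ≤
      payoff c b (coAux b (D.erase (lastCrossout b D))) + utility c (lastCrossout b D) := by
  induction b, D using coAux_induction generalizing q with
  | empty b => exact absurd hq (notMem_empty q)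
  | step b D hne ih =>
    set m := leastMorsel b D hne
    set E := D.erase m
    by_cases hqL : q = lastCrossout b D
    · rw [hqL]
    have hcard : 1 < D.card := one_lt_card.2 ⟨q, hq, _, lastCrossout_mem b hne, hqL⟩
    have hE : E.Nonempty := by
      rw [← card_pos, card_erase_of_mem (leastMorsel_mem b hne)]; omega
    have hL : lastCrossout b D = lastCrossout (!b) E := lastCrossout_of_one_lt_card b hne hcard
    have hLm : lastCrossout b D ≠ m := by
      rw [hL]; exact ne_of_mem_erase (lastCrossout_mem (!b) hE)
    have hDE : TotallyOrderedPrefs E := hD.mono (erase_subset _ _)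
    rw [coAux_erase_of_ne_leastMorsel hD b hne hLm, hL, payoff]
    by_cases hqm : q = m
    · set m' := leastMorsel b E hE
      have hm' := ih hDE (leastMorsel_mem b hE)
      rw [hqm, coAux_of_nonempty b hE, payoff]
      have hswap : (if b = c then 0 else utility c m') + utility c m ≤
          (if b = c then 0 else utility c m) + utility c m' := by
        split_ifs with hbc
        · subst hbc
          simpa using utility_leastMorsel_le b hne (mem_of_mem_erase (leastMorsel_mem b hE))
        · linarith
      linarith
    · rw [coAux_erase_of_ne_leastMorsel hD b hne hqm, payoff]
      have hq' := ih hDE (mem_erase.2 ⟨hqm, hq⟩)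
      linarith

noncomputable def score (c : Bool) (s t : Finset (ℝ × ℝ) → ℝ × ℝ) : ℕ → Finset (ℝ × ℝ) → ℝ
  | 0, _ => 0
  | n + 1, D =>
    if D.Nonempty then
      if (Even D.card ↔ c) then utility c (s D) + score c s t n (D.erase (s D))
      else score c s t n (D.erase (t D))
    else 0

lemma scoreA_eq_score (s t : Finset (ℝ × ℝ) → ℝ × ℝ) (n : ℕ) (D : Finset (ℝ × ℝ)) :
    scoreA s t n D = score true s t n D := by
  induction n generalizing D with
  | zero => rfl
  | succ n ih =>
    simp only [scoreA, score, ih, iff_true]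
    rfl

lemma scoreB_eq_score (s t : Finset (ℝ × ℝ) → ℝ × ℝ) (n : ℕ) (D : Finset (ℝ × ℝ)) :
    scoreB s t n D = score false s t n D := by
  induction n generalizing D with
  | zero => rfl
  | succ n ih =>
    simp only [scoreB, score, ih, Bool.false_eq_true, iff_false, Nat.not_even_iff_odd]
    rfl

lemma crossoutStrategy_eq_lastCrossout (D : Finset (ℝ × ℝ)) :
    crossoutStrategy D = lastCrossout true D :=
  rfl

lemma score_crossout_eq_payoff (c : Bool) {D : Finset (ℝ × ℝ)} (hD : TotallyOrderedPrefs D) :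
    score c crossoutStrategy crossoutStrategy D.card D = payoff c true (coAux true D) := by
  induction hn : D.card generalizing D with
  | zero => simp [score, card_eq_zero.1 hn, coAux_empty, payoff]
  | succ n ih =>
    have h : D.Nonempty := card_pos.1 (by omega)
    have hL := lastCrossout_mem true h
    rw [score, if_pos h, payoff_coAux_eq_add hD c h, crossoutStrategy_eq_lastCrossout,
      ih (hD.mono (erase_subset _ _)) (by simp [card_erase_of_mem hL, hn])]
    split_ifs <;> ring

theorem score_le_payoff (c : Bool) {D : Finset (ℝ × ℝ)} (hD : TotallyOrderedPrefs D)
    {s : Finset (ℝ × ℝ) → ℝ × ℝ} (hs : ∀ E : Finset (ℝ × ℝ), E.Nonempty → s E ∈ E) :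
    score c s crossoutStrategy D.card D ≤ payoff c true (coAux true D) := by
  induction hn : D.card generalizing D with
  | zero => simp [score, card_eq_zero.1 hn, coAux_empty, payoff]
  | succ n ih =>
    have h : D.Nonempty := card_pos.1 (by omega)
    have ih' {x : ℝ × ℝ} (hx : x ∈ D) :=
      ih (hD.mono (erase_subset x D)) (by simp [card_erase_of_mem hx, hn])
    rw [score, if_pos h, payoff_coAux_eq_add hD c h, crossoutStrategy_eq_lastCrossout]
    split_ifs
    · calc utility c (s D) + score c s crossoutStrategy n (D.erase (s D))
          ≤ payoff c true (coAux true (D.erase (s D))) + utility c (s D) := by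
            linarith [ih' (hs D h)]
        _ ≤ _ := payoff_erase_add_le hD c true (hs D h)
    · simpa using ih' (lastCrossout_mem true h)

/-- Kohler–Chandrasekaran: the pair (crossout, crossout) is a subgame perfect
equilibrium of Ethiopian Dinner. -/
theorem crossout_equilibrium (D : Finset (ℝ × ℝ)) (hD : TotallyOrderedPrefs D)
    (s : Finset (ℝ × ℝ) → ℝ × ℝ) (hs : ∀ E : Finset (ℝ × ℝ), E.Nonempty → s E ∈ E) :
    vA s crossoutStrategy D ≤ vA crossoutStrategy crossoutStrategy D ∧
    vB s crossoutStrategy D ≤ vB crossoutStrategy crossoutStrategy D := by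
  simp only [vA, vB, scoreA_eq_score, scoreB_eq_score, score_crossout_eq_payoff _ hD]
  exact ⟨score_le_payoff true hD hs, score_le_payoff false hD hs⟩
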